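/- arXiv:2507.06912 — 7 statements merged into one kernel-verified Lean document; each statement's English description precedes it below -/
import Mathlib

section
/- Let H be a Hilbert space, ρ a density operator on H, and M an operator with 0 ≤ M ≤ I. If tr(ρM) ≤ ε, then the trace norm of Mρ satisfies ‖Mρ‖₁ ≤ √ε. -/
/-!
Write `Mρ = (M√ρ)√ρ`. The trace norm satisfies the Cauchy–Schwarz bound
`‖XY‖₁ ≤ ‖X‖₂ ‖Y‖₂` in Hilbert–Schmidt norms: if `U` diagonalizes `(XY)ᴴXY`, the columns `b_j`
of `XYU` are orthogonal with `‖XY‖₁ = ∑ ‖b_j‖`, and `‖b_j‖ = ⟪Xᴴ u_j, YU e_j⟫` for the normalized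
`u_j = b_j / ‖b_j‖`; Cauchy–Schwarz together with Bessel's inequality for the `u_j` gives the bound.
Here `‖√ρ‖₂² = tr ρ = 1`, and `‖M√ρ‖₂² = tr(√ρ M² √ρ) ≤ tr(ρM) ≤ ε` because `0 ≤ M ≤ 1`
forces `M² ≤ M`.
-/

open Matrix ComplexOrder

/-- The trace norm `‖A‖₁ = tr √(Aᴴ A)` of a complex matrix. -/
noncomputable def traceNorm {n : ℕ} (A : Matrix (Fin n) (Fin n) ℂ) : ℝ :=
  (((Matrix.posSemidef_conjTranspose_mul_self A).1.eigenvectorUnitary : Matrix (Fin n) (Fin n) ℂ) *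
      diagonal (((↑) : ℝ → ℂ) ∘ (√·) ∘ (Matrix.posSemidef_conjTranspose_mul_self A).1.eigenvalues) *
      (star (Matrix.posSemidef_conjTranspose_mul_self A).1.eigenvectorUnitary :
        Matrix (Fin n) (Fin n) ℂ)).trace.re

open RCLike WithLp
open scoped InnerProductSpace MatrixOrder

section Bessel

variable {𝕜 E ι : Type*} [RCLike 𝕜] [NormedAddCommGroup E] [InnerProductSpace 𝕜 E] [Fintype ι]

theorem inner_inv_norm_smul_self (x : E) :
    ⟪(‖x‖ : 𝕜)⁻¹ • x, x⟫_𝕜 = ‖x‖ := by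
  rw [inner_smul_left, inner_self_eq_norm_sq_to_K, map_inv₀, conj_ofReal]
  rcases eq_or_ne ‖x‖ 0 with h | h
  · simp [h]
  · field_simp

theorem sum_norm_inner_inv_norm_smul_sq_le {b : ι → E} (hb : Pairwise fun i j ↦ ⟪b i, b j⟫_𝕜 = 0)
    (x : E) : ∑ i, ‖⟪(‖b i‖ : 𝕜)⁻¹ • b i, x⟫_𝕜‖ ^ 2 ≤ ‖x‖ ^ 2 := by
  classical
  have hortho : Orthonormal 𝕜 fun i : {i // b i ≠ 0} ↦ (‖b i‖ : 𝕜)⁻¹ • b i := by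
    refine ⟨fun i ↦ norm_smul_inv_norm i.2, fun i j hij ↦ ?_⟩
    dsimp only
    rw [inner_smul_left, inner_smul_right, hb (Subtype.coe_ne_coe.mpr hij), mul_zero, mul_zero]
  calc ∑ i, ‖⟪(‖b i‖ : 𝕜)⁻¹ • b i, x⟫_𝕜‖ ^ 2
      = ∑ i : {i // b i ≠ 0}, ‖⟪(‖b i‖ : 𝕜)⁻¹ • b i, x⟫_𝕜‖ ^ 2 := by
        rw [← Finset.sum_filter_of_ne (p := (b · ≠ 0)) fun i _ hi hzero ↦ by simp [hzero] at hi]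
        exact Finset.sum_subtype _ (by simp) _
    _ ≤ ‖x‖ ^ 2 := hortho.sum_inner_products_le x

end Bessel

section Columns

variable {𝕜 l m n : Type*} [RCLike 𝕜] [Fintype m]

theorem Matrix.inner_toLp_col (A : Matrix m n 𝕜) (B : Matrix m l 𝕜) (i : n) (j : l) :
    ⟪toLp 2 (A.col i), toLp 2 (B.col j)⟫_𝕜 = (Aᴴ * B) i j := by
  simp [EuclideanSpace.inner_toLp_toLp, dotProduct, mul_apply, mul_comm]

theorem Matrix.norm_toLp_col_sq (A : Matrix m n 𝕜) (j : n) :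
    ‖toLp 2 (A.col j)‖ ^ 2 = re ((Aᴴ * A) j j) := by
  rw [← inner_toLp_col, inner_self_eq_norm_sq]

theorem Matrix.sum_norm_toLp_col_sq [Fintype n] (A : Matrix m n 𝕜) :
    ∑ j, ‖toLp 2 (A.col j)‖ ^ 2 = re (Aᴴ * A).trace := by
  simp only [norm_toLp_col_sq, trace, diag, map_sum]

theorem Matrix.col_mul (X : Matrix l m 𝕜) (Y : Matrix m n 𝕜) (j : n) :
    (X * Y).col j = X *ᵥ Y.col j := by
  ext i; rfl

theorem Matrix.inner_toLp_mulVec [Fintype n] (X : Matrix m n 𝕜) (u : EuclideanSpace 𝕜 m)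
    (v : n → 𝕜) :
    ⟪u, toLp 2 (X *ᵥ v)⟫_𝕜 = ⟪toLp 2 (Xᴴ *ᵥ ofLp u), toLp 2 v⟫_𝕜 := by
  rw [EuclideanSpace.inner_toLp_toLp, EuclideanSpace.inner_eq_star_dotProduct, star_mulVec,
    conjTranspose_conjTranspose, dotProduct_comm, dotProduct_mulVec, dotProduct_comm]

theorem Matrix.norm_toLp_conjTranspose_mulVec_sq [Fintype n] (X : Matrix m n 𝕜)
    (u : EuclideanSpace 𝕜 m) :
    ‖toLp 2 (Xᴴ *ᵥ ofLp u)‖ ^ 2 = ∑ k, ‖⟪u, toLp 2 (X.col k)⟫_𝕜‖ ^ 2 := by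
  rw [EuclideanSpace.norm_sq_eq]
  refine Finset.sum_congr rfl fun k _ ↦ ?_
  rw [norm_inner_symm]
  simp [EuclideanSpace.inner_eq_star_dotProduct, mulVec, dotProduct, mul_comm]

end Columns

section Holder

variable {𝕜 l m n : Type*} [RCLike 𝕜] [Fintype l] [Fintype m] [Fintype n]

theorem Matrix.sum_norm_toLp_col_mul_le (X : Matrix l m 𝕜) (Y : Matrix m n 𝕜)
    (hXY : ((X * Y)ᴴ * (X * Y)).IsDiag) :
    ∑ j, ‖toLp 2 ((X * Y).col j)‖ ≤ √(re (Xᴴ * X).trace) * √(re (Yᴴ * Y).trace) := by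
  set b := fun j ↦ toLp 2 ((X * Y).col j)
  have hb : Pairwise fun i j ↦ ⟪b i, b j⟫_𝕜 = 0 := fun i j hij ↦
    (inner_toLp_col _ _ i j).trans (hXY hij)
  set w := fun j ↦ toLp 2 (Xᴴ *ᵥ ofLp ((‖b j‖ : 𝕜)⁻¹ • b j))
  have hb_eq : ∀ j, ‖b j‖ = re ⟪w j, toLp 2 (Y.col j)⟫_𝕜 := fun j ↦ by
    rw [← inner_toLp_mulVec, ← col_mul, inner_inv_norm_smul_self, ofReal_re]
  have hw : ∑ j, ‖w j‖ ^ 2 ≤ re (Xᴴ * X).trace := by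
    simp only [w, norm_toLp_conjTranspose_mulVec_sq]
    rw [Finset.sum_comm, ← sum_norm_toLp_col_sq]
    exact Finset.sum_le_sum fun k _ ↦ sum_norm_inner_inv_norm_smul_sq_le hb _
  calc ∑ j, ‖b j‖ = ∑ j, re ⟪w j, toLp 2 (Y.col j)⟫_𝕜 := Finset.sum_congr rfl fun j _ ↦ hb_eq j
    _ ≤ ∑ j, ‖w j‖ * ‖toLp 2 (Y.col j)‖ := Finset.sum_le_sum fun j _ ↦ re_inner_le_norm _ _
    _ ≤ √(∑ j, ‖w j‖ ^ 2) * √(∑ j, ‖toLp 2 (Y.col j)‖ ^ 2) := Real.sum_mul_le_sqrt_mul_sqrt _ _ _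
    _ ≤ √(re (Xᴴ * X).trace) * √(re (Yᴴ * Y).trace) := by
      rw [sum_norm_toLp_col_sq]
      gcongr

end Holder

section Diagonalization

variable {𝕜 n : Type*} [RCLike 𝕜] [Fintype n] [DecidableEq n]

theorem Matrix.IsHermitian.conjTranspose_mul_self_eigenvectorUnitary (A : Matrix n n 𝕜)
    (hA : (Aᴴ * A).IsHermitian) :
    (A * hA.eigenvectorUnitary.val)ᴴ * (A * hA.eigenvectorUnitary.val) =
      diagonal (ofReal ∘ hA.eigenvalues) := by
  rw [← hA.conjStarAlgAut_star_eigenvectorUnitary, Unitary.conjStarAlgAut_star_apply,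
    conjTranspose_mul, ← star_eq_conjTranspose, mul_assoc, mul_assoc, mul_assoc]

end Diagonalization

section Order

variable {𝕜 n : Type*} [RCLike 𝕜] [Fintype n]

theorem Matrix.re_trace_mono {A B : Matrix n n 𝕜} (h : A ≤ B) : re A.trace ≤ re B.trace := by
  have := (le_iff.mp h).trace_nonneg
  rw [trace_sub, sub_nonneg] at this
  exact (RCLike.le_iff_re_im.mp this).1

theorem Matrix.mul_self_le_self [DecidableEq n] {A : Matrix n n 𝕜} (h₀ : 0 ≤ A) (h₁ : A ≤ 1) :
    A * A ≤ A := by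
  set S := CFC.sqrt A
  have hS : star S = S := (CFC.sqrt_nonneg A).isSelfAdjoint
  have hSS : S * S = A := CFC.sqrt_mul_sqrt_self A h₀
  calc A * A = star S * A * S := by rw [hS, ← hSS]; simp only [mul_assoc]
    _ ≤ star S * 1 * S := star_left_conjugate_le_conjugate h₁ S
    _ = A := by rw [hS, mul_one, hSS]

end Order

section TraceNormBound

variable {n : ℕ}

theorem traceNorm_eq_sum_norm_toLp_col (A : Matrix (Fin n) (Fin n) ℂ) :
    traceNorm A = ∑ j, ‖toLp 2
      ((A * (posSemidef_conjTranspose_mul_self A).1.eigenvectorUnitary.val).col j)‖ := by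
  rw [traceNorm, trace_mul_cycle, Unitary.coe_star_mul_self, one_mul, trace_diagonal,
    Complex.re_sum]
  refine Finset.sum_congr rfl fun j _ ↦ ?_
  rw [← Real.sqrt_sq (norm_nonneg _), norm_toLp_col_sq,
    IsHermitian.conjTranspose_mul_self_eigenvectorUnitary]
  simp

theorem traceNorm_mul_le (X Y : Matrix (Fin n) (Fin n) ℂ) :
    traceNorm (X * Y) ≤ √(Xᴴ * X).trace.re * √(Yᴴ * Y).trace.re := by
  set U := (posSemidef_conjTranspose_mul_self (X * Y)).1.eigenvectorUnitary
  have hdiag : ((X * (Y * U.val))ᴴ * (X * (Y * U.val))).IsDiag := by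
    rw [← mul_assoc X, IsHermitian.conjTranspose_mul_self_eigenvectorUnitary]
    exact isDiag_diagonal _
  have htrace : ((Y * U.val)ᴴ * (Y * U.val)).trace = (Yᴴ * Y).trace := by
    rw [conjTranspose_mul, ← star_eq_conjTranspose, mul_assoc, trace_mul_comm, ← mul_assoc,
      mul_assoc, Unitary.mul_star_self_of_mem U.2, mul_one]
  rw [traceNorm_eq_sum_norm_toLp_col, mul_assoc]
  simpa only [htrace, RCLike.re_to_complex] using sum_norm_toLp_col_mul_le X (Y * U.val) hdiag

end TraceNormBound

theorem stmt_0_general {n : ℕ} (ρ M : Matrix (Fin n) (Fin n) ℂ) (ε : ℝ)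
    (hρ : ρ.PosSemidef) (hρtr : ρ.trace = 1)
    (hM : M.PosSemidef) (hM1 : (1 - M).PosSemidef)
    (htr : ((ρ * M).trace).re ≤ ε) :
    traceNorm (M * ρ) ≤ Real.sqrt ε := by
  set S := CFC.sqrt ρ
  have hS : star S = S := (CFC.sqrt_nonneg ρ).isSelfAdjoint
  have hSS : S * S = ρ := CFC.sqrt_mul_sqrt_self ρ hρ.nonneg
  have hS_trace : (Sᴴ * S).trace.re = 1 := by
    rw [← star_eq_conjTranspose, hS, hSS, hρtr, Complex.one_re]
  have hMS_trace : ((M * S)ᴴ * (M * S)).trace.re ≤ ε :=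
    calc ((M * S)ᴴ * (M * S)).trace.re = (star S * (M * M) * S).trace.re := by
          rw [conjTranspose_mul, hM.1.eq, ← star_eq_conjTranspose]; simp only [mul_assoc]
      _ ≤ (star S * M * S).trace.re :=
          re_trace_mono (star_left_conjugate_le_conjugate (mul_self_le_self hM.nonneg hM1) S)
      _ = (ρ * M).trace.re := by rw [hS, trace_mul_cycle, hSS]
      _ ≤ ε := htr
  calc traceNorm (M * ρ) = traceNorm ((M * S) * S) := by rw [mul_assoc, hSS]
    _ ≤ √((M * S)ᴴ * (M * S)).trace.re * √(Sᴴ * S).trace.re := traceNorm_mul_le _ _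
    _ ≤ √ε := by
      rw [hS_trace, Real.sqrt_one, mul_one]
      exact Real.sqrt_le_sqrt hMS_trace

/-- If `ρ` is a density matrix, `0 ≤ M ≤ 1` and `tr(ρM) ≤ ε`, then `‖Mρ‖₁ ≤ √ε`. -/
theorem stmt_0 {n : ℕ} (ρ M : Matrix (Fin n) (Fin n) ℂ) (ε : ℝ)
    (hρ : ρ.PosSemidef) (hρtr : ρ.trace = 1)
    (hM : M.PosSemidef) (hM1 : (1 - M).PosSemidef)
    (hε : 0 ≤ ε) (htr : ((ρ * M).trace).re ≤ ε) :
    traceNorm (M * ρ) ≤ Real.sqrt ε :=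
  stmt_0_general ρ M ε hρ hρtr hM hM1 htr
end

section
/- Let ψ and φ be unit vectors in a Hilbert space and let M be an operator with 0 ≤ M ≤ I. Then |⟨ψ|M|ψ⟩ − ⟨φ|M|φ⟩| ≤ √(1 − |⟨ψ|φ⟩|²). -/
/-!
Write `a = ψ - φ`, `b = ψ + φ` and `d = ⟨ψ|M|ψ⟩ - ⟨φ|M|φ⟩`. Since `M` and `1 - M` are Hermitian,
`Re ⟨a|M|b⟩ = d` and `Re ⟨a|1 - M|b⟩ = -d`, so the Cauchy–Schwarz inequality for the positive
semidefinite forms of `M` and of `1 - M` gives `d² ≤ ⟨a|M|a⟩⟨b|M|b⟩` and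
`d² ≤ ⟨a|1 - M|a⟩⟨b|1 - M|b⟩`. Adding the square roots yields `4d² ≤ ‖a‖²‖b‖² = 4(1 - (Re⟨ψ|φ⟩)²)`.
Multiplying `φ` by a phase makes `⟨ψ|φ⟩ = |⟨ψ|φ⟩|` without changing `⟨φ|M|φ⟩`.
-/

open Matrix ComplexOrder RCLike

-- Cauchy–Schwarz in `ℝ²`: `√(pq) + √(p'q') ≤ √((p + p')(q + q'))`.
lemma four_mul_sq_le_add_mul_add {d p q p' q' : ℝ} (hp : 0 ≤ p) (hq : 0 ≤ q) (hp' : 0 ≤ p')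
    (hq' : 0 ≤ q') (h : d ^ 2 ≤ p * q) (h' : d ^ 2 ≤ p' * q') :
    4 * d ^ 2 ≤ (p + p') * (q + q') := by
  have hcross : 2 * d ^ 2 ≤ p * q' + p' * q := by
    nlinarith [sq_nonneg (p * q' - p' * q), mul_le_mul h h' (sq_nonneg d) (by positivity),
      mul_nonneg hp hq', mul_nonneg hp' hq]
  nlinarith

namespace Matrix

variable {𝕜 n : Type*} [RCLike 𝕜] [Fintype n]

lemma norm_star_dotProduct_sq_le (x y : n → 𝕜) :
    ‖star x ⬝ᵥ y‖ ^ 2 ≤ re (star x ⬝ᵥ x) * re (star y ⬝ᵥ y) := by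
  have h := inner_mul_inner_self_le (𝕜 := 𝕜) (WithLp.toLp 2 x) (WithLp.toLp 2 y)
  rw [norm_inner_symm (WithLp.toLp 2 y), ← sq] at h
  simpa only [EuclideanSpace.inner_toLp_toLp, dotProduct_comm _ (star _)] using h

lemma IsHermitian.star_dotProduct_mulVec_comm {N : Matrix n n 𝕜} (hN : N.IsHermitian)
    (x y : n → 𝕜) : star (star x ⬝ᵥ N *ᵥ y) = star y ⬝ᵥ N *ᵥ x := by
  rw [← star_dotProduct, star_mulVec, ← dotProduct_mulVec, hN.eq]

lemma IsHermitian.re_star_sub_dotProduct_mulVec_add {N : Matrix n n 𝕜} (hN : N.IsHermitian)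
    (x y : n → 𝕜) :
    re (star (x - y) ⬝ᵥ N *ᵥ (x + y)) = re (star x ⬝ᵥ N *ᵥ x) - re (star y ⬝ᵥ N *ᵥ y) := by
  have hxy : re (star y ⬝ᵥ N *ᵥ x) = re (star x ⬝ᵥ N *ᵥ y) := by
    rw [← hN.star_dotProduct_mulVec_comm, star_def, conj_re]
  simp only [star_sub, mulVec_add, sub_dotProduct, dotProduct_add, map_add, map_sub, hxy]
  ring

lemma re_star_sub_dotProduct_mul_re_star_add_dotProduct {x y : n → 𝕜}
    (hx : star x ⬝ᵥ x = 1) (hy : star y ⬝ᵥ y = 1) :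
    re (star (x - y) ⬝ᵥ (x - y)) * re (star (x + y) ⬝ᵥ (x + y)) =
      4 * (1 - re (star x ⬝ᵥ y) ^ 2) := by
  have hyx : re (star y ⬝ᵥ x) = re (star x ⬝ᵥ y) := by
    rw [star_dotProduct, star_def, conj_re]
  simp only [star_sub, star_add, sub_dotProduct, add_dotProduct, dotProduct_sub,
    dotProduct_add, map_sub, map_add, hx, hy, hyx, one_re]
  ring

lemma star_smul_dotProduct_smul {ω : 𝕜} (hω : ‖ω‖ = 1) (x y : n → 𝕜) :
    star (ω • x) ⬝ᵥ (ω • y) = star x ⬝ᵥ y := by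
  rw [star_smul, smul_dotProduct, dotProduct_smul, smul_smul, smul_eq_mul, star_def,
    RCLike.conj_mul, hω, ofReal_one, one_pow, one_mul]

lemma star_smul_dotProduct_mulVec_smul {ω : 𝕜} (hω : ‖ω‖ = 1) (N : Matrix n n 𝕜)
    (x y : n → 𝕜) : star (ω • x) ⬝ᵥ N *ᵥ (ω • y) = star x ⬝ᵥ N *ᵥ y := by
  rw [mulVec_smul, star_smul_dotProduct_smul hω]

variable [DecidableEq n]

open scoped MatrixOrder in
lemma PosSemidef.star_dotProduct_mulVec_eq_sqrt {N : Matrix n n 𝕜} (hN : N.PosSemidef)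
    (x y : n → 𝕜) :
    star x ⬝ᵥ N *ᵥ y = star (CFC.sqrt N *ᵥ x) ⬝ᵥ (CFC.sqrt N *ᵥ y) := by
  rw [star_mulVec, ← dotProduct_mulVec, mulVec_mulVec, (CFC.sqrt_nonneg N).posSemidef.1,
    CFC.sqrt_mul_sqrt_self N hN.nonneg]

lemma PosSemidef.norm_star_dotProduct_mulVec_sq_le {N : Matrix n n 𝕜} (hN : N.PosSemidef)
    (x y : n → 𝕜) :
    ‖star x ⬝ᵥ N *ᵥ y‖ ^ 2 ≤ re (star x ⬝ᵥ N *ᵥ x) * re (star y ⬝ᵥ N *ᵥ y) := by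
  simpa only [hN.star_dotProduct_mulVec_eq_sqrt] using norm_star_dotProduct_sq_le _ _

lemma star_dotProduct_one_sub_mulVec (M : Matrix n n 𝕜) (x y : n → 𝕜) :
    star x ⬝ᵥ (1 - M) *ᵥ y = star x ⬝ᵥ y - star x ⬝ᵥ M *ᵥ y := by
  rw [sub_mulVec, one_mulVec, dotProduct_sub]

lemma four_mul_sq_re_sub_le {M : Matrix n n 𝕜} (hM : M.PosSemidef) (hM1 : (1 - M).PosSemidef)
    {x y : n → 𝕜} (hxy : star x ⬝ᵥ x = star y ⬝ᵥ y) :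
    4 * (re (star x ⬝ᵥ M *ᵥ x) - re (star y ⬝ᵥ M *ᵥ y)) ^ 2 ≤
      re (star (x - y) ⬝ᵥ (x - y)) * re (star (x + y) ⬝ᵥ (x + y)) := by
  set d := re (star x ⬝ᵥ M *ᵥ x) - re (star y ⬝ᵥ M *ᵥ y)
  have hd : re (star (x - y) ⬝ᵥ M *ᵥ (x + y)) = d := hM.1.re_star_sub_dotProduct_mulVec_add x y
  have hd' : re (star (x - y) ⬝ᵥ (1 - M) *ᵥ (x + y)) = -d := by
    rw [hM1.1.re_star_sub_dotProduct_mulVec_add, star_dotProduct_one_sub_mulVec,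
      star_dotProduct_one_sub_mulVec, hxy]
    simp only [map_sub]
    ring
  have hsq {N : Matrix n n 𝕜} (hN : N.PosSemidef) :
      re (star (x - y) ⬝ᵥ N *ᵥ (x + y)) ^ 2 ≤
        re (star (x - y) ⬝ᵥ N *ᵥ (x - y)) * re (star (x + y) ⬝ᵥ N *ᵥ (x + y)) :=
    (sq_le_sq' (neg_le_of_abs_le (abs_re_le_norm _)) (le_of_abs_le (abs_re_le_norm _))).trans
      (hN.norm_star_dotProduct_mulVec_sq_le _ _)
  have h := four_mul_sq_le_add_mul_add (hM.re_dotProduct_nonneg _) (hM.re_dotProduct_nonneg _)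
    (hM1.re_dotProduct_nonneg _) (hM1.re_dotProduct_nonneg _) (hd ▸ hsq hM)
    (neg_sq d ▸ hd' ▸ hsq hM1)
  simpa only [star_dotProduct_one_sub_mulVec, map_sub, add_sub_cancel] using h

end Matrix

lemma RCLike.exists_norm_eq_one_mul_eq_norm {𝕜 : Type*} [RCLike 𝕜] (c : 𝕜) :
    ∃ ω : 𝕜, ‖ω‖ = 1 ∧ ω * c = ‖c‖ := by
  rcases eq_or_ne c 0 with rfl | hc
  · exact ⟨1, norm_one, by simp⟩
  · refine ⟨starRingEnd 𝕜 c / ‖c‖, ?_, ?_⟩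
    · rw [norm_div, norm_conj, norm_ofReal, abs_norm, div_self (norm_ne_zero_iff.mpr hc)]
    · rw [div_mul_eq_mul_div, RCLike.conj_mul, sq, mul_div_assoc,
        div_self (ofReal_ne_zero.mpr (norm_ne_zero_iff.mpr hc)), mul_one]

/-- For unit vectors `ψ, φ` and `0 ≤ M ≤ 1`,
`|⟨ψ|M|ψ⟩ − ⟨φ|M|φ⟩| ≤ √(1 − |⟨ψ|φ⟩|²)`. -/
theorem stmt_1 {n : ℕ} (M : Matrix (Fin n) (Fin n) ℂ) (ψ φ : Fin n → ℂ)
    (hψ : star ψ ⬝ᵥ ψ = 1) (hφ : star φ ⬝ᵥ φ = 1)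
    (hM : M.PosSemidef) (hM1 : (1 - M).PosSemidef) :
    ‖(star ψ ⬝ᵥ M.mulVec ψ) - (star φ ⬝ᵥ M.mulVec φ)‖ ≤
      Real.sqrt (1 - ‖star ψ ⬝ᵥ φ‖ ^ 2) := by
  obtain ⟨ω, hω, hωc⟩ := RCLike.exists_norm_eq_one_mul_eq_norm (star ψ ⬝ᵥ φ)
  have hφω : star (ω • φ) ⬝ᵥ ω • φ = 1 := (star_smul_dotProduct_smul hω φ φ).trans hφ
  have hψφω : re (star ψ ⬝ᵥ ω • φ) = ‖star ψ ⬝ᵥ φ‖ := by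
    rw [dotProduct_smul, smul_eq_mul, hωc, ofReal_re]
  have key := four_mul_sq_re_sub_le hM hM1 (hψ.trans hφω.symm)
  rw [re_star_sub_dotProduct_mul_re_star_add_dotProduct hψ hφω, hψφω,
    star_smul_dotProduct_mulVec_smul hω] at key
  have him : (star ψ ⬝ᵥ M *ᵥ ψ - star φ ⬝ᵥ M *ᵥ φ).im = 0 := by
    rw [← im_to_complex, map_sub, hM.1.im_star_dotProduct_mulVec_self,
      hM.1.im_star_dotProduct_mulVec_self, sub_zero]
  rw [← Complex.abs_re_eq_norm.mpr him, Complex.sub_re, ← re_to_complex, ← re_to_complex]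
  exact Real.abs_le_sqrt (by linarith)
end

section
/- Let M₀ be an operator with 0 ≤ M₀ ≤ I and let ψ, φ be unit vectors such that ⟨ψ|M₀|ψ⟩ − ⟨φ|M₀|φ⟩ ≥ 1 − δ for some δ ∈ [0,1]. Then |⟨ψ|φ⟩| ≤ √(2δ − δ²). -/
/-!
Split `⟨ψ|φ⟩ = ⟨ψ|M₀|φ⟩ + ⟨ψ|1 - M₀|φ⟩` and apply Cauchy–Schwarz to both positive
semidefinite forms: with `a = ⟨ψ|M₀|ψ⟩ = cos² α` and `b = ⟨φ|M₀|φ⟩ = cos² β` this gives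
`|⟨ψ|φ⟩| ≤ cos α cos β + sin α sin β = cos (α - β)`. As `a - b = sin (β - α) sin (β + α)`,
we get `cos² (α - β) + (a - b)² ≤ 1`, so the gap `a - b ≥ 1 - δ ≥ 0` forces
`|⟨ψ|φ⟩|² ≤ 1 - (1 - δ)² = 2δ - δ²`.
-/

open Matrix ComplexOrder

theorem sq_mul_add_mul_le_one_sub_sq_sub_sq {p q r s : ℝ} (hpr : p ^ 2 + r ^ 2 = 1)
    (hqs : q ^ 2 + s ^ 2 = 1) : (p * q + r * s) ^ 2 ≤ 1 - (p ^ 2 - q ^ 2) ^ 2 := by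
  have hlagrange : (p * q + r * s) ^ 2 + (p * s - r * q) ^ 2 = 1 := by
    linear_combination (q ^ 2 + s ^ 2) * hpr + hqs
  have hfactor : p ^ 2 - q ^ 2 = (p * s - r * q) * (p * s + r * q) := by
    linear_combination q ^ 2 * hpr - p ^ 2 * hqs
  have hle : (p * s + r * q) ^ 2 ≤ 1 := by
    nlinarith [sq_nonneg (p * q - r * s)]
  rw [hfactor, mul_pow]
  nlinarith [sq_nonneg (p * s - r * q)]

theorem sq_sqrt_mul_sqrt_add_sqrt_mul_sqrt_le {a b : ℝ} (ha : a ∈ Set.Icc (0 : ℝ) 1)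
    (hb : b ∈ Set.Icc (0 : ℝ) 1) :
    (√a * √b + √(1 - a) * √(1 - b)) ^ 2 ≤ 1 - (a - b) ^ 2 := by
  have hsq : ∀ {c : ℝ}, c ∈ Set.Icc (0 : ℝ) 1 → √c ^ 2 + √(1 - c) ^ 2 = 1 := fun hc => by
    rw [Real.sq_sqrt hc.1, Real.sq_sqrt (sub_nonneg.2 hc.2)]; ring
  simpa only [Real.sq_sqrt ha.1, Real.sq_sqrt hb.1] using
    sq_mul_add_mul_le_one_sub_sq_sub_sq (hsq ha) (hsq hb)

namespace Matrix
variable {n 𝕜 : Type*} [Fintype n] [RCLike 𝕜] {A : Matrix n n 𝕜}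

theorem PosSemidef.norm_dotProduct_mulVec_le (hA : A.PosSemidef) (x y : n → 𝕜) :
    ‖star x ⬝ᵥ (A *ᵥ y)‖ ≤
      √(RCLike.re (star x ⬝ᵥ (A *ᵥ x))) * √(RCLike.re (star y ⬝ᵥ (A *ᵥ y))) := by
  let := A.toSeminormedAddCommGroup hA
  let := A.toInnerProductSpace hA
  have hinner : ∀ u v : n → 𝕜, inner 𝕜 u v = star u ⬝ᵥ (A *ᵥ v) := fun u v =>
    dotProduct_comm _ _
  simpa only [norm_eq_sqrt_re_inner (𝕜 := 𝕜), hinner] using norm_inner_le_norm (𝕜 := 𝕜) x y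

variable [DecidableEq n]

theorem re_dotProduct_one_sub_mulVec {x : n → 𝕜} (hx : star x ⬝ᵥ x = 1) :
    RCLike.re (star x ⬝ᵥ ((1 - A) *ᵥ x)) = 1 - RCLike.re (star x ⬝ᵥ (A *ᵥ x)) := by
  rw [sub_mulVec, one_mulVec, dotProduct_sub, hx, map_sub, RCLike.one_re]

theorem re_dotProduct_mulVec_mem_Icc (hA : A.PosSemidef) (hA1 : (1 - A).PosSemidef)
    {x : n → 𝕜} (hx : star x ⬝ᵥ x = 1) :
    RCLike.re (star x ⬝ᵥ (A *ᵥ x)) ∈ Set.Icc (0 : ℝ) 1 := by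
  have hA1x := hA1.re_dotProduct_nonneg x
  rw [re_dotProduct_one_sub_mulVec hx] at hA1x
  exact ⟨hA.re_dotProduct_nonneg x, sub_nonneg.1 hA1x⟩

theorem sq_norm_dotProduct_le_one_sub_sq (hA : A.PosSemidef) (hA1 : (1 - A).PosSemidef)
    {x y : n → 𝕜} (hx : star x ⬝ᵥ x = 1) (hy : star y ⬝ᵥ y = 1) :
    ‖star x ⬝ᵥ y‖ ^ 2 ≤
      1 - (RCLike.re (star x ⬝ᵥ (A *ᵥ x)) - RCLike.re (star y ⬝ᵥ (A *ᵥ y))) ^ 2 := by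
  set a := RCLike.re (star x ⬝ᵥ (A *ᵥ x))
  set b := RCLike.re (star y ⬝ᵥ (A *ᵥ y))
  have hsplit : star x ⬝ᵥ y = star x ⬝ᵥ (A *ᵥ y) + star x ⬝ᵥ ((1 - A) *ᵥ y) := by
    rw [sub_mulVec, one_mulVec, dotProduct_sub, add_sub_cancel]
  have hle : ‖star x ⬝ᵥ y‖ ≤ √a * √b + √(1 - a) * √(1 - b) := by
    rw [hsplit, ← re_dotProduct_one_sub_mulVec hx, ← re_dotProduct_one_sub_mulVec hy]
    exact (norm_add_le _ _).trans
      (add_le_add (hA.norm_dotProduct_mulVec_le x y) (hA1.norm_dotProduct_mulVec_le x y))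
  calc ‖star x ⬝ᵥ y‖ ^ 2 ≤ (√a * √b + √(1 - a) * √(1 - b)) ^ 2 := by gcongr
    _ ≤ 1 - (a - b) ^ 2 := sq_sqrt_mul_sqrt_add_sqrt_mul_sqrt_le
        (re_dotProduct_mulVec_mem_Icc hA hA1 hx) (re_dotProduct_mulVec_mem_Icc hA hA1 hy)

end Matrix

/-- If `0 ≤ M₀ ≤ 1` and unit vectors `ψ, φ` satisfy `⟨ψ|M₀|ψ⟩ − ⟨φ|M₀|φ⟩ ≥ 1 − δ`,
then `|⟨ψ|φ⟩| ≤ √(2δ − δ²)`. -/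
theorem stmt_4 {n : ℕ} (M₀ : Matrix (Fin n) (Fin n) ℂ) (ψ φ : Fin n → ℂ) (δ : ℝ)
    (hψ : star ψ ⬝ᵥ ψ = 1) (hφ : star φ ⬝ᵥ φ = 1)
    (hM : M₀.PosSemidef) (hM1 : (1 - M₀).PosSemidef)
    (hδ : δ ∈ Set.Icc (0 : ℝ) 1)
    (hgap : 1 - δ ≤ (star ψ ⬝ᵥ M₀.mulVec ψ).re - (star φ ⬝ᵥ M₀.mulVec φ).re) :
    ‖star ψ ⬝ᵥ φ‖ ≤ Real.sqrt (2 * δ - δ ^ 2) := by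
  refine Real.le_sqrt_of_sq_le ?_
  calc ‖star ψ ⬝ᵥ φ‖ ^ 2
      ≤ 1 - ((star ψ ⬝ᵥ M₀ *ᵥ ψ).re - (star φ ⬝ᵥ M₀ *ᵥ φ).re) ^ 2 :=
        sq_norm_dotProduct_le_one_sub_sq hM hM1 hψ hφ
    _ ≤ 1 - (1 - δ) ^ 2 := by gcongr; exact sub_nonneg.2 hδ.2
    _ = 2 * δ - δ ^ 2 := by ring
end

section
/- (Trigonometric moment problem / Herglotz) Let γ be an N×N positive semidefinite complex matrix that is Toeplitz, i.e. γ_{jk} = g(k−j) for some function g: {−(N−1),…,N−1} → ℂ. Then there exists a finite positive Borel measure μ on the unit circle such that g(m) = ∫ z^m dμ(z) for all |m| ≤ N−1. -/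
/-!
Factor `γ` as a Gram matrix `γ j k = ⟪v j, v k⟫` in `ℂᴺ`. By the Toeplitz property the shifted
families `v 0, …, v (N-2)` and `v 1, …, v (N-1)` have the same Gram matrix, so some unitary `U`
maps one to the other, and then `v k = U ^ k (v 0)` and `g (k - j) = ⟪v 0, U ^ (k - j) (v 0)⟫`.
Expanding `v 0` in the orthogonal eigenvectors of `U`, whose eigenvalues lie on the unit circle,
turns this into the moments of a finite sum of point masses on the circle.
-/

open MeasureTheory
open scoped NNReal ComplexOrder

section Gram

variable {𝕜 E : Type*} [RCLike 𝕜] [NormedAddCommGroup E] [InnerProductSpace 𝕜 E]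

theorem Matrix.PosSemidef.exists_gram_eq {n : Type*} [Fintype n] {A : Matrix n n 𝕜}
    (hA : A.PosSemidef) : ∃ v : n → EuclideanSpace 𝕜 n, Matrix.gram 𝕜 v = A := by
  classical
  open scoped MatrixOrder in
  obtain ⟨B, rfl⟩ := CStarAlgebra.nonneg_iff_eq_star_mul_self.mp hA.nonneg
  refine ⟨fun j => WithLp.toLp 2 (B.transpose j), ?_⟩
  ext j k
  simp [EuclideanSpace.inner_toLp_toLp, Matrix.mul_apply, dotProduct, mul_comm]

theorem LinearMap.exists_linearIsometry_comp_eq [FiniteDimensional 𝕜 E] {F : Type*}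
    [AddCommGroup F] [Module 𝕜 F] (B C : F →ₗ[𝕜] E) (h : ∀ x, ‖B x‖ = ‖C x‖) :
    ∃ U : E →ₗᵢ[𝕜] E, ∀ x, U (B x) = C x := by
  obtain ⟨s, hs⟩ := B.rangeRestrict.exists_rightInverse_of_surjective B.range_rangeRestrict
  have hBs (y : B.range) : B (s y) = y := congr($(LinearMap.ext_iff.mp hs y).1)
  have hCs (x : F) : C (s (B.rangeRestrict x)) = C x := by
    rw [← sub_eq_zero, ← map_sub, ← norm_eq_zero, ← h, map_sub, hBs]
    simp
  let L : B.range →ₗᵢ[𝕜] E := ⟨C ∘ₗ s, fun y => by simp [← h, hBs]⟩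
  exact ⟨L.extend, fun x => (L.extend_apply (B.rangeRestrict x)).trans (hCs x)⟩

theorem exists_linearIsometryEquiv_apply_eq_of_gram_eq [FiniteDimensional 𝕜 E] {ι : Type*}
    [Fintype ι] {v w : ι → E} (h : Matrix.gram 𝕜 v = Matrix.gram 𝕜 w) :
    ∃ U : E ≃ₗᵢ[𝕜] E, ∀ i, U (v i) = w i := by
  classical
  have hnorm (x : ι → 𝕜) :
      ‖Fintype.linearCombination 𝕜 v x‖ = ‖Fintype.linearCombination 𝕜 w x‖ := by
    rw [@norm_eq_sqrt_re_inner 𝕜, @norm_eq_sqrt_re_inner 𝕜, Fintype.linearCombination_apply,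
      Fintype.linearCombination_apply, ← Matrix.star_dotProduct_gram_mulVec, h,
      Matrix.star_dotProduct_gram_mulVec]
  obtain ⟨U, hU⟩ := LinearMap.exists_linearIsometry_comp_eq _ _ hnorm
  refine ⟨U.toLinearIsometryEquiv rfl, fun i => ?_⟩
  simpa using hU (Pi.single i 1)

theorem exists_linearIsometryEquiv_pow_apply_eq [FiniteDimensional 𝕜 E] {n : ℕ}
    (v : Fin (n + 1) → E)
    (hv : ∀ j k : Fin n, inner 𝕜 (v j.castSucc) (v k.castSucc) = inner 𝕜 (v j.succ) (v k.succ)) :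
    ∃ U : E ≃ₗᵢ[𝕜] E, ∀ k : Fin (n + 1), (U ^ (k : ℕ)) (v 0) = v k := by
  obtain ⟨U, hU⟩ := exists_linearIsometryEquiv_apply_eq_of_gram_eq
    (v := v ∘ Fin.castSucc) (w := v ∘ Fin.succ) (Matrix.ext hv)
  refine ⟨U, Fin.induction (by simp) fun k ih => ?_⟩
  rw [Fin.val_castSucc] at ih
  rw [Fin.val_succ, pow_succ', LinearIsometryEquiv.coe_mul, Function.comp_apply, ih]
  exact hU k

end Gram

theorem MeasureTheory.integral_finsetSum_smul_dirac {α G : Type*} [MeasurableSpace α]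
    [MeasurableSingletonClass α] [NormedAddCommGroup G] [NormedSpace ℝ G] [CompleteSpace G]
    (s : Finset α) (w : α → ℝ≥0) (f : α → G) :
    ∫ a, f a ∂(∑ x ∈ s, w x • Measure.dirac x) = ∑ x ∈ s, (w x : ℝ) • f x := by
  rw [integral_finsetSum_measure fun x _ => (integrable_dirac enorm_lt_top).smul_measure_nnreal]
  simp only [integral_smul_nnreal_measure, integral_dirac, NNReal.smul_def]

namespace LinearIsometryEquiv

section RCLike

variable {𝕜 E : Type*} [RCLike 𝕜] [NormedAddCommGroup E] [InnerProductSpace 𝕜 E]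
  (U : E ≃ₗᵢ[𝕜] E)

theorem norm_eq_one_of_apply_eq_smul {y : E} {z : 𝕜} (hy : U y = z • y) (hy₀ : y ≠ 0) :
    ‖z‖ = 1 := by
  have := U.norm_map y
  rw [hy, norm_smul] at this
  exact (mul_eq_right₀ (norm_ne_zero_iff.mpr hy₀)).mp this

theorem zpow_apply_of_apply_eq_smul {y : E} {z : 𝕜} (hy : U y = z • y) (m : ℤ) :
    (U ^ m) y = z ^ m • y := by
  rcases eq_or_ne y 0 with rfl | hy₀
  · simp
  have hz : z ≠ 0 := norm_ne_zero_iff.mp (by simp [U.norm_eq_one_of_apply_eq_smul hy hy₀])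
  have hy' : U.symm y = z⁻¹ • y := by
    rw [U.symm_apply_eq, map_smul, hy, smul_smul, inv_mul_cancel₀ hz, one_smul]
  induction m using Int.induction_on with
  | zero => simp
  | succ k ih => rw [zpow_add_one, coe_mul, Function.comp_apply, hy, map_smul, ih, smul_smul,
      zpow_add_one₀ hz, mul_comm]
  | pred k ih => rw [zpow_sub_one, coe_mul, Function.comp_apply, coe_inv, hy', map_smul, ih,
      smul_smul, zpow_sub_one₀ hz, mul_comm]

theorem inner_eq_zero_of_apply_eq_smul {y y' : E} {z z' : 𝕜} (hy : U y = z • y)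
    (hy' : U y' = z' • y') (hne : z ≠ z') : inner 𝕜 y y' = 0 := by
  have h := U.inner_map_eq_flip y y'
  rw [hy, inner_smul_left, ← coe_inv, ← zpow_neg_one, U.zpow_apply_of_apply_eq_smul hy',
    inner_smul_right] at h
  by_contra h₀
  have hy'₀ : y' ≠ 0 := by rintro rfl; simp at h₀
  rw [zpow_neg_one, RCLike.inv_eq_conj (U.norm_eq_one_of_apply_eq_smul hy' hy'₀)] at h
  exact hne ((starRingEnd 𝕜).injective (mul_right_cancel₀ h₀ h))

theorem inner_sum_zpow_apply_sum {s : Finset 𝕜} {c : 𝕜 → E}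
    (hc : ∀ z ∈ s, U (c z) = z • c z) (m : ℤ) :
    inner 𝕜 (∑ z ∈ s, c z) ((U ^ m) (∑ z ∈ s, c z)) = ∑ z ∈ s, (‖c z‖ : 𝕜) ^ 2 * z ^ m := by
  rw [sum_inner]
  refine Finset.sum_congr rfl fun z hz => ?_
  rw [map_sum, inner_sum, Finset.sum_eq_single_of_mem z hz,
    U.zpow_apply_of_apply_eq_smul (hc z hz), inner_smul_right, inner_self_eq_norm_sq_to_K,
    mul_comm]
  intro z' hz' hne
  rw [U.zpow_apply_of_apply_eq_smul (hc z' hz'), inner_smul_right,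
    U.inner_eq_zero_of_apply_eq_smul (hc z hz) (hc z' hz') hne.symm, mul_zero]

theorem inner_zpow_apply_zpow_apply (x : E) (j k : ℤ) :
    inner 𝕜 ((U ^ j) x) ((U ^ k) x) = inner 𝕜 x ((U ^ (k - j)) x) := by
  rw [show U ^ k = U ^ j * U ^ (k - j) by group, coe_mul, Function.comp_apply, inner_map_map]

end RCLike

variable {E : Type*} [NormedAddCommGroup E] [InnerProductSpace ℂ E] [FiniteDimensional ℂ E]
  (U : E ≃ₗᵢ[ℂ] E)

theorem iSup_eigenspace_eq_top : ⨆ z, Module.End.eigenspace (U : E →ₗ[ℂ] E) z = ⊤ := by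
  set W := ⨆ z, Module.End.eigenspace (U : E →ₗ[ℂ] E) z
  have hW (w : E) (hw : w ∈ W) : U.symm w ∈ W := by
    induction hw using Submodule.iSup_induction' with
    | mem z y hy =>
      rw [Module.End.mem_eigenspace_iff] at hy
      rw [← coe_inv, ← zpow_neg_one, U.zpow_apply_of_apply_eq_smul hy]
      exact Submodule.mem_iSup_of_mem z
        (Submodule.smul_mem _ _ (Module.End.mem_eigenspace_iff.mpr hy))
    | zero => simp
    | add y y' _ _ h h' => simpa using add_mem h h'
  have hWperp (v : E) (hv : v ∈ Wᗮ) : U v ∈ Wᗮ := fun w hw => by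
    rw [← U.apply_symm_apply w, inner_map_map]
    exact hv _ (hW w hw)
  -- A nonzero `U`-invariant `Wᗮ` would contain an eigenvector of `U`, which lies in `W`.
  by_contra hne
  have : Nontrivial Wᗮ :=
    Submodule.nontrivial_iff_ne_bot.mpr (mt Submodule.orthogonal_eq_bot_iff.mp hne)
  obtain ⟨z, hz⟩ := Module.End.exists_eigenvalue ((U : E →ₗ[ℂ] E).restrict hWperp)
  obtain ⟨v, hv⟩ := hz.exists_hasEigenvector
  have hvW : (v : E) ∈ W := Submodule.mem_iSup_of_mem z
    (Module.End.mem_eigenspace_iff.mpr congr($(hv.apply_eq_smul).1))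
  exact hv.2 (Subtype.ext (inner_self_eq_zero.mp (v.2 _ hvW)))

theorem exists_measure_inner_zpow_apply_eq (x : E) :
    ∃ μ : Measure ℂ, IsFiniteMeasure μ ∧ μ {z | ‖z‖ ≠ 1} = 0 ∧
      ∀ m : ℤ, inner ℂ x ((U ^ m) x) = ∫ z, z ^ m ∂μ := by
  obtain ⟨c, hc, rfl⟩ := (Submodule.mem_iSup_iff_exists_finsupp _ x).mp
    (U.iSup_eigenspace_eq_top ▸ Submodule.mem_top)
  simp only [Module.End.mem_eigenspace_iff] at hc
  refine ⟨∑ z ∈ c.support, ‖c z‖₊ ^ 2 • Measure.dirac z, inferInstance, ?_, fun m => ?_⟩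
  · rw [Measure.finsetSum_apply]
    refine Finset.sum_eq_zero fun z hz => ?_
    simp [Measure.dirac_apply,
      U.norm_eq_one_of_apply_eq_smul (hc z) (Finsupp.mem_support_iff.mp hz)]
  · rw [Finsupp.sum, U.inner_sum_zpow_apply_sum (fun z _ => hc z),
      integral_finsetSum_smul_dirac]
    simp

end LinearIsometryEquiv

open MeasureTheory Matrix ComplexOrder

/-- (Trigonometric moment problem / Herglotz) A positive semidefinite Toeplitz matrix
`γ_{jk} = g(k−j)` arises from moments of a finite positive measure on the unit circle. -/
theorem stmt_11 (N : ℕ) (γ : Matrix (Fin N) (Fin N) ℂ) (g : ℤ → ℂ)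
    (hγ : γ.PosSemidef)
    (hT : ∀ j k : Fin N, γ j k = g (((k : ℕ) : ℤ) - ((j : ℕ) : ℤ))) :
    ∃ μ : Measure ℂ, IsFiniteMeasure μ ∧
      μ {z : ℂ | ‖z‖ ≠ 1} = 0 ∧
      ∀ m : ℤ, |m| ≤ (N : ℤ) - 1 → g m = ∫ z, z ^ m ∂μ := by
  obtain _ | n := N
  · exact ⟨0, inferInstance, rfl, fun m hm => by have := abs_nonneg m; push_cast at hm; omega⟩
  obtain ⟨v, rfl⟩ := hγ.exists_gram_eq
  obtain ⟨U, hU⟩ := exists_linearIsometryEquiv_pow_apply_eq (𝕜 := ℂ) v fun j k => by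
    rw [← gram_apply, ← gram_apply, hT, hT]
    simp
  obtain ⟨μ, hμ, hcircle, hmoment⟩ := U.exists_measure_inner_zpow_apply_eq (v 0)
  refine ⟨μ, hμ, hcircle, fun m hm => ?_⟩
  rw [abs_le] at hm
  push_cast at hm
  obtain ⟨j, k, rfl⟩ : ∃ j k : Fin (n + 1), ((k : ℕ) : ℤ) - ((j : ℕ) : ℤ) = m :=
    ⟨⟨(-m).toNat, by omega⟩, ⟨m.toNat, by omega⟩, by simp⟩
  rw [← hT, gram_apply, ← hU j, ← hU k, ← zpow_natCast, ← zpow_natCast,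
    U.inner_zpow_apply_zpow_apply, hmoment]
end

section
/- Let h be a real trigonometric polynomial on the n-torus with zero constant term: h(z) = Σ_{j ∈ Z} (h_j z^j + conj(h_j) z^{−j}) where Z ⊂ ℤⁿ \ {0} is finite and z^j = Π_l z_l^{j_l} for z in the torus 𝕋ⁿ = {z ∈ ℂⁿ : |z_l| = 1}. Then −min_{z ∈ 𝕋ⁿ} h(z) ≥ max_{j ∈ Z} |h_j|. -/
/-!
Fix `s ∈ Z` and a phase `e` with `e h_s = |h_s|`. The weight `w(z) = 2 - ē z^s - e z^{-s}` is
real and nonnegative on the torus, and `w h` is `-2|h_s|` plus nonconstant monomials, because `Z`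
avoids `0` and `-s`. Summing over the grid of `N`-th roots of unity, with `N` larger than all
exponents involved, kills the nonconstant monomials, so the `w`-weighted mean of `h` is `-|h_s|`
and `h ≤ -|h_s|` at some grid point.
-/

open Complex Finset ComplexConjugate
open scoped Pointwise

lemma Finset.exists_le_of_sum_mul_le {ι : Type*} {s : Finset ι} {w f : ι → ℝ} {c : ℝ}
    (hw : ∀ i ∈ s, 0 ≤ w i) (hpos : 0 < ∑ i ∈ s, w i)
    (h : ∑ i ∈ s, w i * f i ≤ c * ∑ i ∈ s, w i) : ∃ i ∈ s, f i ≤ c := by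
  by_contra! hlt
  obtain ⟨i, hi, hwi⟩ := exists_lt_of_sum_lt (f := 0) (g := w) (by simpa using hpos)
  have : c * ∑ i ∈ s, w i < ∑ i ∈ s, w i * f i := by
    rw [mul_sum]
    refine sum_lt_sum (fun j hj => ?_) ⟨i, hi, ?_⟩
    · rw [mul_comm]; exact mul_le_mul_of_nonneg_left (hlt j hj).le (hw j hj)
    · rw [mul_comm]; exact mul_lt_mul_of_pos_left (hlt i hi) hwi
  linarith

lemma IsPrimitiveRoot.sum_pow_zpow_eq_zero {K : Type*} [Field K] {ζ : K} {N : ℕ}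
    (hζ : IsPrimitiveRoot ζ N) {k : ℤ} (hk : ¬ (N : ℤ) ∣ k) :
    ∑ a : Fin N, (ζ ^ (a : ℕ)) ^ k = 0 := by
  have hx : ζ ^ k ≠ 1 := mt (hζ.zpow_eq_one_iff_dvd k).mp hk
  have hxN : (ζ ^ k) ^ N = 1 := by
    rw [← zpow_natCast, zpow_comm, zpow_natCast, hζ.pow_eq_one, one_zpow]
  simp_rw [← zpow_natCast ζ, zpow_comm _ _ k, zpow_natCast]
  rw [Fin.sum_univ_eq_sum_range (fun a => (ζ ^ k) ^ a), geom_sum_eq hx, hxN, sub_self, zero_div]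

lemma exists_pos_forall_exists_not_dvd {ι : Type*} [Fintype ι] (S : Finset (ι → ℤ)) :
    ∃ N : ℕ, 0 < N ∧ ∀ v ∈ S, v ≠ 0 → ∃ l, ¬ (N : ℤ) ∣ v l := by
  refine ⟨∑ v ∈ S, ∑ l, (v l).natAbs + 1, Nat.succ_pos _, fun v hv hv0 => ?_⟩
  obtain ⟨l, hl⟩ := Function.ne_iff.mp hv0
  refine ⟨l, fun hdvd => hl (Int.eq_zero_of_dvd_of_natAbs_lt_natAbs hdvd ?_)⟩
  have hle : (v l).natAbs ≤ ∑ v ∈ S, ∑ l, (v l).natAbs :=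
    (single_le_sum (f := fun l => (v l).natAbs) (fun _ _ => Nat.zero_le _) (mem_univ l)).trans
      (single_le_sum (f := fun v => ∑ l, (v l).natAbs) (fun _ _ => Nat.zero_le _) hv)
  simp only [Int.natAbs_natCast]
  omega

section Monomial

variable {ι : Type*}

def gridPoint (ζ : ℂ) {N : ℕ} (t : ι → Fin N) : ι → ℂ := fun l => ζ ^ (t l : ℕ)

lemma norm_gridPoint {ζ : ℂ} {N : ℕ} (hζ : IsPrimitiveRoot ζ N) (t : ι → Fin N) (l : ι) :
    ‖gridPoint ζ t l‖ = 1 := by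
  have : N ≠ 0 := fun h => (h ▸ t l).elim0
  simp [gridPoint, hζ.norm'_eq_one this]

variable [Fintype ι]

noncomputable def laurentMonomial (z : ι → ℂ) (j : ι → ℤ) : ℂ := ∏ l, z l ^ j l

@[simp]
lemma laurentMonomial_zero (z : ι → ℂ) : laurentMonomial z 0 = 1 := by
  simp [laurentMonomial]

lemma laurentMonomial_add {z : ι → ℂ} (hz : ∀ l, z l ≠ 0) (j k : ι → ℤ) :
    laurentMonomial z (j + k) = laurentMonomial z j * laurentMonomial z k := by
  simp only [laurentMonomial, ← prod_mul_distrib, Pi.add_apply, zpow_add₀ (hz _)]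

lemma norm_laurentMonomial {z : ι → ℂ} (hz : ∀ l, ‖z l‖ = 1) (j : ι → ℤ) :
    ‖laurentMonomial z j‖ = 1 := by
  simp [laurentMonomial, hz]

lemma conj_laurentMonomial {z : ι → ℂ} (hz : ∀ l, ‖z l‖ = 1) (j : ι → ℤ) :
    conj (laurentMonomial z j) = laurentMonomial z (-j) := by
  simp only [laurentMonomial, map_prod, map_zpow₀, ← RCLike.inv_eq_conj (hz _), inv_zpow',
    Pi.neg_apply]

lemma sum_laurentMonomial_gridPoint_eq_zero [DecidableEq ι] {ζ : ℂ} {N : ℕ}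
    (hζ : IsPrimitiveRoot ζ N) {v : ι → ℤ} (hv : ∃ l, ¬ (N : ℤ) ∣ v l) :
    ∑ t : ι → Fin N, laurentMonomial (gridPoint ζ t) v = 0 := by
  obtain ⟨l, hl⟩ := hv
  simp only [laurentMonomial, gridPoint]
  rw [← Fintype.prod_sum (fun l (a : Fin N) => (ζ ^ (a : ℕ)) ^ v l)]
  exact prod_eq_zero (mem_univ l) (hζ.sum_pow_zpow_eq_zero hl)

end Monomial

section Averaging

variable {ι τ : Type*} [Fintype ι] [Fintype τ]

noncomputable def trigPoly (Z : Finset (ι → ℤ)) (h : (ι → ℤ) → ℂ) (z : ι → ℂ) : ℂ :=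
  ∑ j ∈ Z, (h j * laurentMonomial z j + conj (h j) * laurentMonomial z (-j))

lemma sum_weight_mul_laurentMonomial {g : τ → ι → ℂ} (hg : ∀ t l, g t l ≠ 0) (e : ℂ)
    (s v : ι → ℤ) :
    ∑ t, (2 - conj e * laurentMonomial (g t) s - e * laurentMonomial (g t) (-s)) *
        laurentMonomial (g t) v =
      2 * ∑ t, laurentMonomial (g t) v - conj e * ∑ t, laurentMonomial (g t) (s + v) -
        e * ∑ t, laurentMonomial (g t) (-s + v) := by
  rw [mul_sum, mul_sum, mul_sum, ← sum_sub_distrib, ← sum_sub_distrib]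
  refine sum_congr rfl fun t _ => ?_
  rw [laurentMonomial_add (hg t), laurentMonomial_add (hg t)]
  ring

lemma sum_laurentMonomial_eq_ite {g : τ → ι → ℂ} {v : ι → ℤ}
    (hv : v ≠ 0 → ∑ t, laurentMonomial (g t) v = 0) :
    ∑ t, laurentMonomial (g t) v = if v = 0 then (Fintype.card τ : ℂ) else 0 := by
  split_ifs with hv0
  · simp [hv0]
  · exact hv hv0

lemma sum_weight_mul_trigPoly {g : τ → ι → ℂ} (hg : ∀ t l, g t l ≠ 0)
    {Z : Finset (ι → ℤ)} (h0 : 0 ∉ Z) (hZ : ∀ j ∈ Z, -j ∉ Z) (h : (ι → ℤ) → ℂ)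
    {s : ι → ℤ} (hs : s ∈ Z)
    (horth : ∀ a ∈ insert 0 (Z ∪ -Z), ∀ b ∈ insert 0 (Z ∪ -Z), a + b ≠ 0 →
      ∑ t, laurentMonomial (g t) (a + b) = 0) (e : ℂ) :
    ∑ t, (2 - conj e * laurentMonomial (g t) s - e * laurentMonomial (g t) (-s)) *
        trigPoly Z h (g t) =
      -(Fintype.card τ * (e * h s + conj e * conj (h s))) := by
  set T := insert 0 (Z ∪ -Z)
  have hσ₂ : ∀ a ∈ T, ∀ b ∈ T, ∑ t, laurentMonomial (g t) (a + b) =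
      if a + b = 0 then (Fintype.card τ : ℂ) else 0 := fun a ha b hb =>
    sum_laurentMonomial_eq_ite (horth a ha b hb)
  have hσ₁ : ∀ a ∈ T, ∑ t, laurentMonomial (g t) a =
      if a = 0 then (Fintype.card τ : ℂ) else 0 := by
    simpa using hσ₂ 0 (mem_insert_self _ _)
  have hT : ∀ j ∈ Z, j ∈ T ∧ -j ∈ T := fun j hj =>
    ⟨mem_insert_of_mem (mem_union_left _ hj),
      mem_insert_of_mem (mem_union_right _ (by simpa using hj))⟩
  have hterm : ∀ j ∈ Z,
      ∑ t, (2 - conj e * laurentMonomial (g t) s - e * laurentMonomial (g t) (-s)) *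
        (h j * laurentMonomial (g t) j + conj (h j) * laurentMonomial (g t) (-j)) =
      if j = s then -(Fintype.card τ * (e * h s + conj e * conj (h s))) else 0 := by
    intro j hj
    simp only [mul_add, sum_add_distrib, mul_left_comm _ (h j), mul_left_comm _ (conj (h j)),
      ← mul_sum, sum_weight_mul_laurentMonomial hg]
    rw [hσ₁ j (hT j hj).1, hσ₁ _ (hT j hj).2, hσ₂ _ (hT s hs).1 _ (hT j hj).1,
      hσ₂ _ (hT s hs).1 _ (hT j hj).2, hσ₂ _ (hT s hs).2 _ (hT j hj).1,
      hσ₂ _ (hT s hs).2 _ (hT j hj).2]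
    have hj0 : j ≠ 0 := ne_of_mem_of_not_mem hj h0
    have hsj : s + j ≠ 0 := fun hsj => hZ j hj (by rwa [← eq_neg_of_add_eq_zero_left hsj])
    have hsj' : -s + -j ≠ 0 := by rw [← neg_add]; exact neg_ne_zero.mpr hsj
    rw [if_neg hj0, if_neg (neg_ne_zero.mpr hj0), if_neg hsj, if_neg hsj']
    simp only [neg_add_eq_zero, add_neg_eq_zero]
    rcases eq_or_ne j s with rfl | hjs
    · simp only [if_true]
      ring
    · simp only [if_neg hjs, if_neg hjs.symm]
      ring
  simp only [trigPoly, mul_sum]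
  rw [sum_comm, sum_congr rfl hterm, sum_ite_eq' Z s, if_pos hs]

end Averaging

lemma exists_re_trigPoly_le_neg_norm {ι τ : Type*} [Fintype ι] [Fintype τ] [Nonempty τ]
    {g : τ → ι → ℂ} (hg : ∀ t l, ‖g t l‖ = 1)
    {Z : Finset (ι → ℤ)} (h0 : 0 ∉ Z) (hZ : ∀ j ∈ Z, -j ∉ Z) (h : (ι → ℤ) → ℂ)
    {s : ι → ℤ} (hs : s ∈ Z)
    (horth : ∀ a ∈ insert 0 (Z ∪ -Z), ∀ b ∈ insert 0 (Z ∪ -Z), a + b ≠ 0 →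
      ∑ t, laurentMonomial (g t) (a + b) = 0) :
    ∃ t, (trigPoly Z h (g t)).re ≤ -‖h s‖ := by
  have hg₀ : ∀ t l, g t l ≠ 0 := fun t l => norm_ne_zero_iff.mp ((hg t l).symm ▸ one_ne_zero)
  obtain ⟨e, he, hes⟩ := Complex.exists_norm_eq_mul_self (h s)
  set w : τ → ℝ := fun t => 2 - 2 * (conj e * laurentMonomial (g t) s).re
  have hw_nonneg : ∀ t, 0 ≤ w t := fun t => by
    have := (re_le_norm _).trans_eq (by rw [norm_mul, norm_conj, he,
      norm_laurentMonomial (hg t), one_mul] : ‖conj e * laurentMonomial (g t) s‖ = 1)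
    simp only [w]
    linarith
  have hw : ∀ t, (w t : ℂ) =
      2 - conj e * laurentMonomial (g t) s - e * laurentMonomial (g t) (-s) := fun t => by
    rw [sub_sub, ← conj_laurentMonomial (hg t), ← conj_conj e, ← map_mul, conj_conj, add_conj]
    push_cast [w]
    ring
  have hsum_w : ∑ t, w t = 2 * Fintype.card τ := by
    have hs0 : s ≠ 0 := ne_of_mem_of_not_mem hs h0
    have hσ : ∀ a ∈ insert 0 (Z ∪ -Z), a ≠ 0 → ∑ t, laurentMonomial (g t) (a + 0) = 0 :=
      fun a ha ha0 => horth a ha 0 (mem_insert_self _ _) (by rwa [add_zero])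
    have := sum_weight_mul_laurentMonomial hg₀ e s 0
    rw [hσ s (mem_insert_of_mem (mem_union_left _ hs)) hs0,
      hσ (-s) (mem_insert_of_mem (mem_union_right _ (by simpa using hs))) (neg_ne_zero.2 hs0)]
      at this
    simp only [laurentMonomial_zero, mul_one, mul_zero, sub_zero, sum_const, card_univ,
      nsmul_eq_mul, ← hw] at this
    exact_mod_cast this
  have hsum_wP : ∑ t, w t * (trigPoly Z h (g t)).re = -‖h s‖ * ∑ t, w t := by
    have := congrArg re (sum_weight_mul_trigPoly hg₀ h0 hZ h hs horth e)
    simp only [re_sum, ← hw, re_ofReal_mul] at this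
    rw [this, hsum_w, ← map_mul, ← hes, conj_ofReal, ← ofReal_natCast, ← ofReal_add,
      ← ofReal_mul, ← ofReal_neg, ofReal_re]
    ring
  obtain ⟨t, -, ht⟩ := exists_le_of_sum_mul_le (s := univ) (fun t _ => hw_nonneg t)
    (by rw [hsum_w]; positivity) hsum_wP.le
  exact ⟨t, ht⟩

/-- For a real trigonometric polynomial on the `n`-torus with no constant term,
`h(z) = Σ_{j ∈ Z} (h_j z^j + conj(h_j) z^{−j})`, the minimum over the torus satisfies
`−min h ≥ max_{j ∈ Z} |h_j|`; equivalently, for every `j ∈ Z` there is a point `z` on the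
torus where `h(z) ≤ −|h_j|`. -/
theorem stmt_13 (n : ℕ) (Z : Finset (Fin n → ℤ)) (h0 : (0 : Fin n → ℤ) ∉ Z)
    (hZ : ∀ j ∈ Z, -j ∉ Z) (h : (Fin n → ℤ) → ℂ) :
    ∀ j ∈ Z, ∃ z : Fin n → ℂ, (∀ l, ‖z l‖ = 1) ∧
      (∑ j' ∈ Z, (h j' * ∏ l, (z l) ^ (j' l) +
        starRingEnd ℂ (h j') * ∏ l, (z l) ^ (-(j' l)))).re ≤ -‖h j‖ := by
  intro s hs
  set T := insert 0 (Z ∪ -Z)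
  obtain ⟨N, hN, hsep⟩ := exists_pos_forall_exists_not_dvd (T + T)
  have hζ := Complex.isPrimitiveRoot_exp N hN.ne'
  have : Nonempty (Fin N) := ⟨⟨0, hN⟩⟩
  obtain ⟨t, ht⟩ := exists_re_trigPoly_le_neg_norm (norm_gridPoint hζ) h0 hZ h hs
    fun a ha b hb hab => sum_laurentMonomial_gridPoint_eq_zero hζ (hsep _ (add_mem_add ha hb) hab)
  exact ⟨gridPoint _ t, norm_gridPoint hζ t, ht⟩
end

section
/- Let μ be a probability measure on ℝ supported in [0, E⁺] such that ∫ e^{2πi(N−1)kE/(N E⁺)} dμ(E) = 0 for k = 1, …, N−1. Then the support of μ is contained in the finite set {k E⁺/(N−1) : k = 0, 1, …, N−1}. -/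
/-!
Write `t = (N - 1) E / E⁺ ∈ [0, N - 1]`, `z = e^{2πit/N}` and `ω = e^{2πi/N}`. The hypothesis says
that `1, z, …, z^{N-1}` are orthonormal in `L²(μ)`, so for `A(z) = ∑_{m<N} z^m` the integral of
`conj (A z) * A (ω z)` is `∑_{m<N} ω^m = 0`. Up to the phase `e^{iπ/N}` this integrand is the real
function `sin² (πt) / (sin (πt/N) sin (π(t+1)/N))`, which is nonnegative for `t ∈ [0, N - 1]` and
vanishes there exactly at the integers. A nonnegative function with zero integral vanishes
`μ`-almost everywhere, so `μ` is carried by the points `t ∈ {0, …, N - 1}`.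
-/

open MeasureTheory Complex Finset
open scoped ComplexConjugate Real

section Orthonormal

variable {α : Type*} [MeasurableSpace α] {μ : Measure α} {f : α → ℂ}

theorem integral_zpow_eq_zero {n : ℕ} (hf : ∀ a, ‖f a‖ = 1)
    (hmom : ∀ k ∈ Icc 1 n, ∫ a, f a ^ k ∂μ = 0) {k : ℤ} (hk0 : k ≠ 0) (hkn : k.natAbs ≤ n) :
    ∫ a, f a ^ k ∂μ = 0 := by
  obtain ⟨j, rfl | rfl⟩ := Int.eq_nat_or_neg k <;>
    have hj : j ∈ Icc 1 n := mem_Icc.2 ⟨by omega, by omega⟩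
  · simpa using hmom j hj
  · have hconj : ∀ a, f a ^ (-(j : ℤ)) = conj (f a ^ j) := fun a => by
      rw [zpow_neg, zpow_natCast, RCLike.inv_eq_conj (by rw [norm_pow, hf, one_pow])]
    simp_rw [hconj, integral_conj, hmom j hj, map_zero]

theorem integrable_zpow [IsFiniteMeasure μ] (hfm : AEMeasurable f μ) (hf : ∀ a, ‖f a‖ = 1)
    (k : ℤ) : Integrable (fun a => f a ^ k) μ :=
  .of_bound (hfm.pow_const k).aestronglyMeasurable 1
    (.of_forall fun a => by rw [norm_zpow, hf, one_zpow])

theorem conj_sum_mul_sum_eq {w : ℂ} (hw : ‖w‖ = 1) (N : ℕ) (c d : ℕ → ℂ) :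
    conj (∑ i ∈ range N, c i * w ^ i) * ∑ j ∈ range N, d j * w ^ j =
      ∑ i ∈ range N, ∑ j ∈ range N, conj (c i) * d j * w ^ ((j : ℤ) - i) := by
  have hw0 : w ≠ 0 := by rintro rfl; simp at hw
  simp_rw [map_sum, map_mul, map_pow, ← RCLike.inv_eq_conj hw, sum_mul, mul_sum,
    zpow_sub₀ hw0, zpow_natCast, inv_pow]
  refine sum_congr rfl fun i _ => sum_congr rfl fun j _ => ?_
  field_simp

theorem integrable_conj_sum_mul_sum [IsFiniteMeasure μ] (hfm : AEMeasurable f μ)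
    (hf : ∀ a, ‖f a‖ = 1) (N : ℕ) (c d : ℕ → ℂ) :
    Integrable (fun a => conj (∑ i ∈ range N, c i * f a ^ i) * ∑ j ∈ range N, d j * f a ^ j)
      μ := by
  simp_rw [conj_sum_mul_sum_eq (hf _)]
  exact integrable_finsetSum _ fun i _ => integrable_finsetSum _ fun j _ =>
    (integrable_zpow hfm hf _).const_mul _

theorem integral_conj_sum_mul_sum [IsProbabilityMeasure μ] (hfm : AEMeasurable f μ)
    (hf : ∀ a, ‖f a‖ = 1) (N : ℕ) (c d : ℕ → ℂ)
    (hmom : ∀ k ∈ Icc 1 (N - 1), ∫ a, f a ^ k ∂μ = 0) :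
    ∫ a, conj (∑ i ∈ range N, c i * f a ^ i) * ∑ j ∈ range N, d j * f a ^ j ∂μ =
      ∑ i ∈ range N, conj (c i) * d i := by
  have hmoment : ∀ i ∈ range N, ∀ j ∈ range N,
      ∫ a, f a ^ ((j : ℤ) - i) ∂μ = if i = j then 1 else 0 := by
    intro i hi j hj
    split_ifs with hij
    · simp [hij]
    · refine integral_zpow_eq_zero hf hmom (by omega) ?_
      simp only [mem_range] at hi hj
      omega
  simp_rw [conj_sum_mul_sum_eq (hf _)]
  rw [integral_finsetSum _ fun i _ => integrable_finsetSum _ fun j _ =>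
    (integrable_zpow hfm hf _).const_mul _]
  refine sum_congr rfl fun i hi => ?_
  rw [integral_finsetSum _ fun j _ => (integrable_zpow hfm hf _).const_mul _]
  simp_rw [integral_const_mul]
  rw [sum_congr rfl fun j hj => by rw [hmoment i hi j hj]]
  simp [hi]

end Orthonormal

theorem geom_sum_exp_mul_sin (N : ℕ) (x : ℂ) :
    (∑ m ∈ range N, exp (2 * x * I) ^ m) * sin x = exp ((N - 1) * x * I) * sin (N * x) := by
  have hsin : ∀ y : ℂ, 2 * I * exp (y * I) * sin y = exp (2 * y * I) - 1 := fun y => by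
    have h1 : exp (y * I) * exp (-y * I) = 1 := by rw [← exp_add]; simp
    have h2 : exp (2 * y * I) = exp (y * I) ^ 2 := by rw [← exp_nat_mul]; push_cast; ring_nf
    rw [sin, h2]
    linear_combination (-1 : ℂ) * h1 + (exp (y * I) * exp (-y * I) - exp (y * I) ^ 2) * I_sq
  have hz : exp (2 * x * I) ^ N = exp (2 * (N * x) * I) := by rw [← exp_nat_mul]; ring_nf
  have hshift : exp ((N - 1) * x * I) * exp (x * I) = exp (N * x * I) := by
    rw [← exp_add]; ring_nf
  refine mul_left_cancel₀ (mul_ne_zero (mul_ne_zero two_ne_zero I_ne_zero) (exp_ne_zero (x * I))) ?_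
  calc 2 * I * exp (x * I) * ((∑ m ∈ range N, exp (2 * x * I) ^ m) * sin x)
      = (∑ m ∈ range N, exp (2 * x * I) ^ m) * (exp (2 * x * I) - 1) := by rw [← hsin]; ring
    _ = 2 * I * exp (N * x * I) * sin (N * x) := by rw [geom_sum_mul, hz, hsin]
    _ = 2 * I * exp (x * I) * (exp ((N - 1) * x * I) * sin (N * x)) := by rw [← hshift]; ring

noncomputable def complexArcKernel (N : ℕ) (t : ℝ) : ℂ :=
  exp (π / N * I) * (conj (∑ m ∈ range N, exp (2 * π * I * t / N) ^ m) *
    ∑ m ∈ range N, exp (2 * π * I / N) ^ m * exp (2 * π * I * t / N) ^ m)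

/-- For `t = (N - 1) E / E⁺` this is `2^{N-1} V(E)`, with `V` the auxiliary function of the
paper. -/
noncomputable def arcKernel (N : ℕ) (t : ℝ) : ℝ := (complexArcKernel N t).re

theorem arcKernel_mul_sin_mul_sin {N : ℕ} (hN : N ≠ 0) (t : ℝ) :
    arcKernel N t * (Real.sin (π * t / N) * Real.sin (π * (t + 1) / N)) = Real.sin (π * t) ^ 2 := by
  have hN' : (N : ℂ) ≠ 0 := Nat.cast_ne_zero.2 hN
  set x : ℝ := π * t / N with hx
  have hxN : (N : ℂ) * x = π * t := by rw [hx]; push_cast; field_simp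
  have hz : exp (2 * π * I * t / N) = exp (2 * x * I) := by rw [hx]; push_cast; ring_nf
  set A := ∑ m ∈ range N, exp (2 * x * I) ^ m
  set B := ∑ m ∈ range N, exp (2 * π * I / N) ^ m * exp (2 * x * I) ^ m
  have hA : conj A * sin x = exp (-((N - 1) * x * I)) * sin (π * t) := by
    have h := congrArg conj (geom_sum_exp_mul_sin N x)
    simp only [map_mul, map_sub, map_one, map_natCast, conj_ofReal, conj_I, ← exp_conj,
      ← sin_conj] at h
    rw [h, ← neg_mul_eq_mul_neg, hxN]
  have hB : B * sin (x + π / N) = -(exp ((N - 1) * (x + π / N) * I) * sin (π * t)) := by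
    have h := geom_sum_exp_mul_sin N (x + π / N)
    have hz' : exp (2 * ((x : ℂ) + π / N) * I) = exp (2 * π * I / N) * exp (2 * x * I) := by
      rw [← exp_add]; ring_nf
    have hs : sin (N * ((x : ℂ) + π / N)) = - sin (π * t) := by
      rw [mul_add, mul_div_cancel₀ _ hN', sin_add_pi, hxN]
    simp_rw [hz', mul_pow, hs] at h
    rw [h]
    ring
  have hphase :
      exp (π / N * I) * (exp (-((N - 1) * x * I)) * exp ((N - 1) * (x + π / N) * I)) = -1 := by
    rw [← exp_add, ← exp_add, ← exp_pi_mul_I]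
    congr 1
    field_simp
    ring
  have hC : exp (π / N * I) * (conj A * B) *
      ((Real.sin x * Real.sin (x + π / N) : ℝ) : ℂ) = ((Real.sin (π * t) ^ 2 : ℝ) : ℂ) := by
    push_cast
    linear_combination (exp (π / N * I) * B * sin (x + π / N)) * hA +
      (exp (π / N * I) * exp (-((N - 1) * x * I)) * sin (π * t)) * hB - sin (π * t) ^ 2 * hphase
  rw [show π * (t + 1) / N = x + π / N by ring, arcKernel, complexArcKernel, hz,
    ← re_mul_ofReal, hC, ofReal_re]

theorem continuous_arcKernel (N : ℕ) : Continuous (arcKernel N) := by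
  unfold arcKernel complexArcKernel
  fun_prop

theorem arcKernel_nonneg {N : ℕ} (hN : 2 ≤ N) {t : ℝ} (ht : t ∈ Set.Icc 0 ((N : ℝ) - 1)) :
    0 ≤ arcKernel N t := by
  have hN1 : (1 : ℝ) < N := by exact_mod_cast hN
  have hopen : Set.Ioo 0 ((N : ℝ) - 1) ⊆ {t | 0 ≤ arcKernel N t} := by
    rintro t ⟨ht0, ht1⟩
    have hsin : ∀ s : ℝ, 0 < s → s < N → 0 < Real.sin (π * s / N) := fun s hs0 hsN =>
      Real.sin_pos_of_pos_of_lt_pi (by positivity) (by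
        rw [div_lt_iff₀ (by positivity)]; nlinarith [Real.pi_pos])
    have hid := arcKernel_mul_sin_mul_sin (by omega : N ≠ 0) t
    exact nonneg_of_mul_nonneg_left (hid ▸ sq_nonneg _)
      (mul_pos (hsin t ht0 (by linarith)) (hsin (t + 1) (by linarith) (by linarith)))
  rw [← closure_Ioo (by linarith : (0 : ℝ) ≠ N - 1)] at ht
  exact (isClosed_le continuous_const (continuous_arcKernel N)).closure_subset_iff.2 hopen ht

theorem exists_nat_eq_of_arcKernel_eq_zero {N : ℕ} (hN : 2 ≤ N) {t : ℝ}
    (h : arcKernel N t = 0) (ht : t ∈ Set.Icc 0 ((N : ℝ) - 1)) : ∃ k : ℕ, k ≤ N - 1 ∧ t = k := by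
  have hsin := arcKernel_mul_sin_mul_sin (by omega : N ≠ 0) t
  rw [h, zero_mul, eq_comm, sq_eq_zero_iff] at hsin
  obtain ⟨m, hm⟩ := Real.sin_eq_zero_iff.1 hsin
  have hmt : (m : ℝ) = t := mul_right_cancel₀ Real.pi_ne_zero (by linarith)
  have hm0 : 0 ≤ m := by exact_mod_cast hmt ▸ ht.1
  have hmN : m ≤ (N : ℤ) - 1 := by exact_mod_cast hmt ▸ ht.2
  refine ⟨m.toNat, by omega, ?_⟩
  rw [← hmt]
  exact_mod_cast (Int.toNat_of_nonneg hm0).symm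

theorem mul_div_mem_Icc_zero {a L E : ℝ} (ha : 0 ≤ a) (hL : 0 < L) (hE : E ∈ Set.Icc 0 L) :
    a * E / L ∈ Set.Icc 0 a :=
  ⟨div_nonneg (mul_nonneg ha hE.1) hL.le,
    (div_le_iff₀ hL).2 (mul_le_mul_of_nonneg_left hE.2 ha)⟩

section Integral

variable {α : Type*} [MeasurableSpace α] {μ : Measure α} {g : α → ℝ} {N : ℕ}

theorem norm_exp_two_pi_mul_I_mul_ofReal_div (N : ℕ) (t : ℝ) : ‖exp (2 * π * I * t / N)‖ = 1 := by
  simpa [mul_comm, mul_assoc, mul_left_comm, div_eq_mul_inv] using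
    norm_exp_ofReal_mul_I (2 * π * t / N)

theorem integrable_complexArcKernel_comp [IsFiniteMeasure μ] (hg : AEMeasurable g μ) :
    Integrable (fun a => complexArcKernel N (g a)) μ := by
  have h := (integrable_conj_sum_mul_sum (by fun_prop)
    (fun a => norm_exp_two_pi_mul_I_mul_ofReal_div N (g a)) N (fun _ => 1)
    fun m => exp (2 * π * I / N) ^ m).const_mul (exp (π / N * I))
  simp only [one_mul] at h
  exact h

theorem integral_complexArcKernel_comp_eq_zero [IsProbabilityMeasure μ] (hN : 2 ≤ N)
    (hg : AEMeasurable g μ)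
    (hmom : ∀ k ∈ Icc 1 (N - 1), ∫ a, exp (2 * π * I * g a / N) ^ k ∂μ = 0) :
    ∫ a, complexArcKernel N (g a) ∂μ = 0 := by
  have hroots : ∑ m ∈ range N, exp (2 * π * I / N) ^ m = 0 :=
    (isPrimitiveRoot_exp N (by omega)).geom_sum_eq_zero (by omega)
  have hint := integral_conj_sum_mul_sum (by fun_prop)
    (fun a => norm_exp_two_pi_mul_I_mul_ofReal_div N (g a)) N (fun _ => 1)
    (fun m => exp (2 * π * I / N) ^ m) hmom
  simp only [one_mul, map_one, hroots] at hint
  simp only [complexArcKernel]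
  rw [integral_const_mul, hint, mul_zero]

theorem integrable_arcKernel_comp [IsFiniteMeasure μ] (hg : AEMeasurable g μ) :
    Integrable (fun a => arcKernel N (g a)) μ :=
  (integrable_complexArcKernel_comp hg).re

theorem integral_arcKernel_comp_eq_zero [IsProbabilityMeasure μ] (hN : 2 ≤ N)
    (hg : AEMeasurable g μ)
    (hmom : ∀ k ∈ Icc 1 (N - 1), ∫ a, exp (2 * π * I * g a / N) ^ k ∂μ = 0) :
    ∫ a, arcKernel N (g a) ∂μ = 0 := by
  refine (integral_re (integrable_complexArcKernel_comp hg)).trans ?_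
  rw [integral_complexArcKernel_comp_eq_zero hN hg hmom, map_zero]

end Integral

/-- (Energy-density rigidity, exact version) If a probability measure `μ` supported in
`[0, E⁺]` satisfies `∫ e^{2πi(N−1)kE/(NE⁺)} dμ(E) = 0` for `k = 1, …, N−1`, then `μ` is
supported in the finite set `{kE⁺/(N−1) : k = 0, …, N−1}`. -/
theorem stmt_14 (N : ℕ) (hN : 2 ≤ N) (Eplus : ℝ) (hE : 0 < Eplus)
    (μ : Measure ℝ) [IsProbabilityMeasure μ]
    (hsupp : μ (Set.Icc 0 Eplus)ᶜ = 0)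
    (hmom : ∀ k ∈ Finset.Icc 1 (N - 1),
      (∫ E, Complex.exp (((2 * Real.pi : ℝ) : ℂ) * Complex.I * ((N : ℂ) - 1) * (k : ℂ) *
          (E : ℂ) / ((N : ℂ) * (Eplus : ℂ))) ∂μ) = 0) :
    μ ({E : ℝ | ∃ k : ℕ, k ≤ N - 1 ∧ E = (k : ℝ) * Eplus / ((N : ℝ) - 1)})ᶜ = 0 := by
  have hN1 : (1 : ℝ) < N := by exact_mod_cast hN
  set t : ℝ → ℝ := fun E => (N - 1) * E / Eplus
  have ht : ∀ E ∈ Set.Icc 0 Eplus, t E ∈ Set.Icc 0 ((N : ℝ) - 1) := fun E =>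
    mul_div_mem_Icc_zero (by linarith) hE
  have hmom' : ∀ k ∈ Icc 1 (N - 1), ∫ E, exp (2 * π * I * t E / N) ^ k ∂μ = 0 := by
    intro k hk
    rw [← hmom k hk]
    congr 1 with E
    rw [← exp_nat_mul]
    congr 1
    simp only [t]
    push_cast
    ring
  have hsupp' : ∀ᵐ E ∂μ, E ∈ Set.Icc 0 Eplus := ae_iff.2 hsupp
  have hnonneg : 0 ≤ᵐ[μ] fun E => arcKernel N (t E) := by
    filter_upwards [hsupp'] with E hEmem using arcKernel_nonneg hN (ht E hEmem)
  have hzero : ∀ᵐ E ∂μ, arcKernel N (t E) = 0 :=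
    (integral_eq_zero_iff_of_nonneg_ae hnonneg (integrable_arcKernel_comp (by fun_prop))).1
      (integral_arcKernel_comp_eq_zero hN (by fun_prop) hmom')
  refine ae_iff.1 ?_
  filter_upwards [hsupp', hzero] with E hEmem hE0
  obtain ⟨k, hk, htk⟩ := exists_nat_eq_of_arcKernel_eq_zero hN hE0 (ht E hEmem)
  refine ⟨k, hk, ?_⟩
  rw [← htk]
  simp only [t]
  field_simp [(by linarith : (N : ℝ) - 1 ≠ 0)]
end

section
/- For N ≥ 2 and E ∈ [0, E⁺], the function V(E) := sin(π(N−1)E/E⁺) · Π_{j=1}^{N−2} sin(jπ/N − π(N−1)E/(N E⁺)) is nonnegative, and V(E) = 0 if and only if E = k E⁺/(N−1) for some integer k with 0 ≤ k ≤ N−1. -/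
/-!
In the variable `t = (N - 1) E / E⁺ ∈ [0, N - 1]`, on each interval `[k, k + 1]` the factor
`sin (π t)` has sign `(-1)^k`, and so does the product: its `j`-th factor `sin (π (j - t) / N)`
has argument in `[-π, 0]` for `j ≤ k` and in `[0, π]` for `j > k`. As for the zeros, `sin (π t)`
vanishes exactly at the integers, and since `|j - t| < N` the `j`-th factor vanishes only at `t = j`.
-/

/-- The auxiliary function
`V(E) = sin(π(N−1)E/E⁺) · Π_{j=1}^{N−2} sin(jπ/N − π(N−1)E/(NE⁺))`. -/
noncomputable def Vfun (N : ℕ) (Eplus E : ℝ) : ℝ :=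
  Real.sin (Real.pi * ((N : ℝ) - 1) * E / Eplus) *
    ∏ j ∈ Finset.Icc 1 (N - 2),
      Real.sin ((j : ℝ) * Real.pi / N - Real.pi * ((N : ℝ) - 1) * E / (N * Eplus))

open Real Finset

namespace Real

theorem neg_one_pow_mul_sin_pi_mul_nonneg {k : ℕ} {t : ℝ} (hkt : k ≤ t) (htk : t ≤ k + 1) :
    0 ≤ (-1) ^ k * sin (π * t) := by
  rw [← sin_sub_nat_mul_pi]
  apply sin_nonneg_of_nonneg_of_le_pi <;> nlinarith [pi_pos]

theorem sin_pi_mul_div_nonneg {s L : ℝ} (hs : 0 ≤ s) (hsL : s ≤ L) : 0 ≤ sin (π * s / L) := by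
  rcases (hs.trans hsL).eq_or_lt with rfl | hL
  · simp
  · apply sin_nonneg_of_nonneg_of_le_pi (by positivity)
    rw [div_le_iff₀ hL]
    nlinarith [pi_pos]

theorem sin_pi_mul_div_eq_zero_iff {s L : ℝ} (hs : |s| < L) : sin (π * s / L) = 0 ↔ s = 0 := by
  have hL : 0 < L := (abs_nonneg s).trans_lt hs
  obtain ⟨hs₁, hs₂⟩ := abs_lt.mp hs
  rw [sin_eq_zero_iff_of_lt_of_lt]
  · simp [pi_ne_zero, hL.ne']
  · rw [lt_div_iff₀ hL]; nlinarith [pi_pos]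
  · rw [div_lt_iff₀ hL]; nlinarith [pi_pos]

theorem sin_pi_mul_eq_zero_iff {t : ℝ} : sin (π * t) = 0 ↔ ∃ k : ℤ, t = k := by
  rw [sin_eq_zero_iff]
  refine exists_congr fun k => ?_
  rw [mul_comm π, mul_left_inj' pi_ne_zero, eq_comm]

end Real

/-- `V` in the variable `t = (N - 1) E / E⁺`, with `n = N - 2` factors and `L = N`. -/
noncomputable def sinShiftProd (n : ℕ) (L t : ℝ) : ℝ :=
  sin (π * t) * ∏ j ∈ Icc 1 n, sin (π * (j - t) / L)

namespace sinShiftProd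

variable {n : ℕ} {L t : ℝ}

theorem neg_one_pow_mul_prod_nonneg {k : ℕ} (hkn : k ≤ n) (hnL : (n : ℝ) ≤ L) (hkt : k ≤ t)
    (htk : t ≤ k + 1) : 0 ≤ (-1) ^ k * ∏ j ∈ Icc 1 n, sin (π * (j - t) / L) := by
  have hsplit : (-1) ^ k * ∏ j ∈ Icc 1 n, sin (π * (j - t) / L) =
      (∏ j ∈ Ioc 0 k, sin (π * (t - j) / L)) * ∏ j ∈ Ioc k n, sin (π * (j - t) / L) := by
    have hneg : ∏ j ∈ Ioc 0 k, sin (π * (t - j) / L) = ∏ j ∈ Ioc 0 k, -sin (π * (j - t) / L) :=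
      prod_congr rfl fun j _ => by rw [← sin_neg]; ring_nf
    rw [hneg, prod_neg, Nat.card_Ioc, Nat.sub_zero, mul_assoc,
      prod_Ioc_consecutive _ (Nat.zero_le k) hkn]
    rfl
  rw [hsplit]
  refine mul_nonneg (prod_nonneg fun j hj => ?_) (prod_nonneg fun j hj => ?_)
  · obtain ⟨hj₀, hjk⟩ := mem_Ioc.mp hj
    have : (1 : ℝ) ≤ j := by exact_mod_cast hj₀
    have : (j : ℝ) ≤ k := by exact_mod_cast hjk
    have : (k : ℝ) ≤ n := by exact_mod_cast hkn
    exact sin_pi_mul_div_nonneg (by linarith) (by linarith)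
  · obtain ⟨hkj, hjn⟩ := mem_Ioc.mp hj
    have : (k : ℝ) + 1 ≤ j := by exact_mod_cast hkj
    have : (j : ℝ) ≤ n := by exact_mod_cast hjn
    have : (0 : ℝ) ≤ k := k.cast_nonneg
    exact sin_pi_mul_div_nonneg (by linarith) (by linarith)

theorem nonneg (hnL : (n : ℝ) ≤ L) (ht₀ : 0 ≤ t) (ht : t ≤ n + 1) : 0 ≤ sinShiftProd n L t := by
  set k := min ⌊t⌋₊ n
  have hkt : (k : ℝ) ≤ t := by
    grw [Nat.cast_le.mpr (min_le_left _ _), Nat.floor_le ht₀]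
  have htk : t ≤ k + 1 := by
    rcases min_choice ⌊t⌋₊ n with hk | hk <;> simp only [k, hk]
    · exact (Nat.lt_floor_add_one t).le
    · exact ht
  have hsq : sinShiftProd n L t = ((-1) ^ k * sin (π * t)) *
      ((-1) ^ k * ∏ j ∈ Icc 1 n, sin (π * (j - t) / L)) := by
    rw [sinShiftProd, mul_mul_mul_comm, ← mul_pow]; norm_num
  rw [hsq]
  exact mul_nonneg (neg_one_pow_mul_sin_pi_mul_nonneg hkt htk)
    (neg_one_pow_mul_prod_nonneg (min_le_right _ _) hnL hkt htk)

theorem eq_zero_iff (hnL : (n : ℝ) < L) (ht₀ : 0 ≤ t) (ht : t ≤ n + 1) :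
    sinShiftProd n L t = 0 ↔ ∃ k : ℕ, k ≤ n + 1 ∧ t = k := by
  constructor
  · intro h
    rcases mul_eq_zero.mp h with h | h
    · obtain ⟨m, rfl⟩ := sin_pi_mul_eq_zero_iff.mp h
      lift m to ℕ using (by exact_mod_cast ht₀)
      exact ⟨m, by exact_mod_cast ht, rfl⟩
    · obtain ⟨j, hj, hsin⟩ := prod_eq_zero_iff.mp h
      obtain ⟨hj₁, hjn⟩ := mem_Icc.mp hj
      have : (1 : ℝ) ≤ j := by exact_mod_cast hj₁
      have : (j : ℝ) ≤ n := by exact_mod_cast hjn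
      have hjt : |(j : ℝ) - t| < L := abs_sub_lt_iff.mpr ⟨by linarith, by linarith⟩
      exact ⟨j, by omega, (sub_eq_zero.mp ((sin_pi_mul_div_eq_zero_iff hjt).mp hsin)).symm⟩
  · rintro ⟨k, -, rfl⟩
    rw [sinShiftProd, mul_comm π, sin_nat_mul_pi, zero_mul]

end sinShiftProd

theorem Vfun_eq_sinShiftProd (n : ℕ) {Eplus : ℝ} (hE : Eplus ≠ 0) (E : ℝ) :
    Vfun (n + 2) Eplus E = sinShiftProd n (n + 2) ((n + 1) * E / Eplus) := by
  simp only [Vfun, sinShiftProd, Nat.add_sub_cancel]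
  push_cast
  congr 1
  · ring_nf
  · refine prod_congr rfl fun j _ => congrArg sin ?_
    field_simp
    ring

/-- On `[0, E⁺]`, `V` is nonnegative and vanishes exactly at the points `kE⁺/(N−1)`,
`k = 0, …, N−1`. -/
theorem stmt_15 (N : ℕ) (hN : 2 ≤ N) (Eplus : ℝ) (hE : 0 < Eplus) :
    ∀ E ∈ Set.Icc (0 : ℝ) Eplus,
      0 ≤ Vfun N Eplus E ∧
      (Vfun N Eplus E = 0 ↔ ∃ k : ℕ, k ≤ N - 1 ∧ E = (k : ℝ) * Eplus / ((N : ℝ) - 1)) := by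
  obtain ⟨n, rfl⟩ : ∃ n, N = n + 2 := ⟨N - 2, by omega⟩
  rintro E ⟨hE₀, hE₁⟩
  set t := (n + 1) * E / Eplus with ht
  have ht₀ : 0 ≤ t := by positivity
  have ht₁ : t ≤ n + 1 := by rw [ht, div_le_iff₀ hE]; nlinarith
  have hnL : (n : ℝ) < n + 2 := by linarith
  have hEt (k : ℝ) : E = k * Eplus / ((n + 2 : ℕ) - 1) ↔ t = k := by
    rw [ht, show ((n + 2 : ℕ) : ℝ) - 1 = n + 1 by push_cast; ring, eq_div_iff (by positivity),
      div_eq_iff hE.ne']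
    constructor <;> intro h <;> linarith
  rw [Vfun_eq_sinShiftProd n hE.ne', ← ht]
  refine ⟨sinShiftProd.nonneg hnL.le ht₀ ht₁, ?_⟩
  simp only [sinShiftProd.eq_zero_iff hnL ht₀ ht₁, hEt, show n + 2 - 1 = n + 1 by omega]
end
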